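/- Let W₀ be a ball in ℂᵐ, V₀ ⋐ W₀ a smaller concentric ball, and suppose there exists α ∈ (0,1] such that sup_{V₀}|φ| ≤ |φ(λ)|^α for every λ ∈ V₀ and every holomorphic φ : W₀ → ℂ with 0 < |φ| < 1 on W₀ (Harnack-type inequality for log|φ|). Let A_n(λ) := det(DF_n(λ)) be nowhere-vanishing holomorphic functions on W₀ with |A_n| ≤ c₂ⁿ on W₀ and |A_n(λ)| ≤ c₁ⁿ δ_n(λ) on V₀ where δ_n(λ) := ‖(DF_n(λ))⁻¹‖⁻¹ and c₁, c₂ > 0. Then for c = c₁ c₂^{(1-α)/α} and every λ, λ₀' ∈ V₀ and n ≥ 1: (1/n)(-log δ_n(λ)) ≤ (k/α)(1/n)(-log δ_n(λ₀')) + log c, where k is the dimension so that δ_n(λ₀')ᵏ ≤ |A_n(λ₀')|. -/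

import Mathlib

/-!
Apply the Harnack inequality to `A_n / (t c₂ⁿ)` with `t > 1`, whose modulus lies strictly
inside `(0, 1)` on `W₀` as the hypothesis demands, and let `t → 1`: this gives
`|A_n(λ₀')| ≤ |A_n(λ)|^α (c₂ⁿ)^(1-α)`. Sandwiching with `δ_n(λ₀')ᵏ ≤ |A_n(λ₀')|` and
`|A_n(λ)| ≤ c₁ⁿ δ_n(λ)` and taking logarithms gives the claim.
-/

open Filter Topology

def HarnackOn {E : Type*} [NormedAddCommGroup E] [NormedSpace ℂ E] (α : ℝ) (W V : Set E) :
    Prop :=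
  ∀ φ : E → ℂ, DifferentiableOn ℂ φ W → (∀ l ∈ W, 0 < ‖φ l‖ ∧ ‖φ l‖ < 1) →
    ∀ l ∈ V, ∀ l' ∈ V, ‖φ l'‖ ≤ ‖φ l‖ ^ α

variable {E : Type*} [NormedAddCommGroup E] [NormedSpace ℂ E] {α M : ℝ} {W V : Set E}

theorem HarnackOn.norm_le_rpow_mul_rpow (hH : HarnackOn α W V) {f : E → ℂ}
    (hf : DifferentiableOn ℂ f W) (hf0 : ∀ l ∈ W, f l ≠ 0) (hM : 0 < M)
    (hfM : ∀ l ∈ W, ‖f l‖ ≤ M) {l l' : E} (hl : l ∈ V) (hl' : l' ∈ V) :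
    ‖f l'‖ ≤ ‖f l‖ ^ α * M ^ (1 - α) := by
  have hlim : Tendsto (fun t : ℝ => ‖f l‖ ^ α * (t * M) ^ (1 - α)) (𝓝[>] 1)
      (𝓝 (‖f l‖ ^ α * M ^ (1 - α))) := by
    have : ContinuousAt (fun t : ℝ => ‖f l‖ ^ α * (t * M) ^ (1 - α)) 1 :=
      continuousAt_const.mul
        ((continuousAt_id.mul continuousAt_const).rpow_const (Or.inl (by simp [hM.ne'])))
    simpa only [one_mul] using this.tendsto.mono_left nhdsWithin_le_nhds
  refine ge_of_tendsto hlim (eventually_nhdsWithin_of_forall fun t (ht : 1 < t) => ?_)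
  have htM : 0 < t * M := by positivity
  have hφ : ∀ x, ‖f x / ((t * M : ℝ) : ℂ)‖ = ‖f x‖ / (t * M) := fun x => by
    rw [norm_div, Complex.norm_real, Real.norm_of_nonneg htM.le]
  have h := hH (fun x => f x / ((t * M : ℝ) : ℂ))
    (by simpa only [div_eq_mul_inv] using hf.mul_const _)
    (fun x hx => by
      rw [hφ, div_lt_one htM]
      exact ⟨div_pos (norm_pos_iff.2 (hf0 x hx)) htM, (hfM x hx).trans_lt (by nlinarith)⟩)
    l hl l' hl'
  simp only [hφ] at h
  rw [div_le_iff₀ htM, Real.div_rpow (norm_nonneg _) htM.le] at h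
  calc ‖f l'‖ ≤ ‖f l‖ ^ α / (t * M) ^ α * (t * M) := h
    _ = ‖f l‖ ^ α * (t * M) ^ (1 - α) := by
      rw [Real.rpow_sub htM, Real.rpow_one]; ring

theorem neg_log_div_le_of_pow_le {k n : ℕ} {x y c₁ c₂ : ℝ} (hn : 0 < n) (hα : 0 < α)
    (hx : 0 < x) (hy : 0 < y) (hc₁ : 0 < c₁) (hc₂ : 0 < c₂)
    (h : y ^ k ≤ (c₁ ^ n * x) ^ α * (c₂ ^ n) ^ (1 - α)) :
    1 / (n : ℝ) * -Real.log x ≤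
      (k : ℝ) / α * (1 / (n : ℝ) * -Real.log y) + Real.log (c₁ * c₂ ^ ((1 - α) / α)) := by
  have hlog := Real.log_le_log (by positivity) h
  rw [Real.log_mul (by positivity) (by positivity), Real.log_rpow (by positivity),
    Real.log_rpow (by positivity), Real.log_mul (by positivity) hx.ne', Real.log_pow,
    Real.log_pow, Real.log_pow] at hlog
  rw [Real.log_mul hc₁.ne' (by positivity), Real.log_rpow hc₂]
  have hn' : (0 : ℝ) < n := by exact_mod_cast hn
  rw [← mul_le_mul_iff_right₀ (mul_pos hn' hα)]
  field_simp
  linarith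

theorem singular_value_transfer_general
    {m : ℕ} (W₀ V₀ : Set (Fin m → ℂ)) (hV₀W₀ : V₀ ⊆ W₀)
    (k : ℕ)
    (α : ℝ) (hα0 : 0 < α)
    (hHarnack : ∀ φ : (Fin m → ℂ) → ℂ, DifferentiableOn ℂ φ W₀ →
      (∀ l ∈ W₀, 0 < ‖φ l‖ ∧ ‖φ l‖ < 1) →
      ∀ l ∈ V₀, ∀ l' ∈ V₀, ‖φ l'‖ ≤ ‖φ l‖ ^ α)
    (c₁ c₂ : ℝ) (hc₁ : 0 < c₁) (hc₂ : 0 < c₂)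
    (A : ℕ → (Fin m → ℂ) → ℂ)
    (hAhol : ∀ n, DifferentiableOn ℂ (A n) W₀)
    (hAnz : ∀ n, ∀ l ∈ W₀, A n l ≠ 0)
    (hAub : ∀ n : ℕ, ∀ l ∈ W₀, ‖A n l‖ ≤ c₂ ^ n)
    (δ : ℕ → (Fin m → ℂ) → ℝ)
    (hAδ : ∀ n : ℕ, ∀ l ∈ V₀, ‖A n l‖ ≤ c₁ ^ n * δ n l)
    (hδA : ∀ n : ℕ, ∀ l ∈ V₀, δ n l ^ k ≤ ‖A n l‖) :
    ∀ n : ℕ, 1 ≤ n → ∀ l ∈ V₀, ∀ l₀' ∈ V₀,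
      (1 / (n : ℝ)) * (-Real.log (δ n l)) ≤
        ((k : ℝ) / α) * ((1 / (n : ℝ)) * (-Real.log (δ n l₀'))) +
          Real.log (c₁ * c₂ ^ ((1 - α) / α)) := by
  intro n hn l hl l₀' hl₀'
  have hδ_pos : ∀ x ∈ V₀, 0 < δ n x := fun x hx =>
    pos_of_mul_pos_right ((norm_pos_iff.2 (hAnz n x (hV₀W₀ hx))).trans_le (hAδ n x hx))
      (by positivity)
  refine neg_log_div_le_of_pow_le hn hα0 (hδ_pos l hl) (hδ_pos l₀' hl₀') hc₁ hc₂ ?_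
  have hH : HarnackOn α W₀ V₀ := hHarnack
  calc δ n l₀' ^ k ≤ ‖A n l₀'‖ := hδA n l₀' hl₀'
    _ ≤ ‖A n l‖ ^ α * (c₂ ^ n) ^ (1 - α) :=
      hH.norm_le_rpow_mul_rpow (hAhol n) (hAnz n) (by positivity) (hAub n) hl hl₀'
    _ ≤ (c₁ ^ n * δ n l) ^ α * (c₂ ^ n) ^ (1 - α) := by
      gcongr
      exact hAδ n l hl

/-- Transfer of the lower bound on the smallest singular value between parameters,
via a Harnack-type inequality for holomorphic functions and determinant estimates:
`(1/n)(-log δ_n(λ)) ≤ (k/α)(1/n)(-log δ_n(λ₀')) + log (c₁ c₂^{(1-α)/α})` on `V₀`. -/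
theorem singular_value_transfer
    {m : ℕ} (W₀ V₀ : Set (Fin m → ℂ)) (hV₀W₀ : V₀ ⊆ W₀)
    (k : ℕ) (hk : 1 ≤ k)
    (α : ℝ) (hα0 : 0 < α) (hα1 : α ≤ 1)
    (hHarnack : ∀ φ : (Fin m → ℂ) → ℂ, DifferentiableOn ℂ φ W₀ →
      (∀ l ∈ W₀, 0 < ‖φ l‖ ∧ ‖φ l‖ < 1) →
      ∀ l ∈ V₀, ∀ l' ∈ V₀, ‖φ l'‖ ≤ ‖φ l‖ ^ α)
    (c₁ c₂ : ℝ) (hc₁ : 0 < c₁) (hc₂ : 0 < c₂)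
    (A : ℕ → (Fin m → ℂ) → ℂ)
    (hAhol : ∀ n, DifferentiableOn ℂ (A n) W₀)
    (hAnz : ∀ n, ∀ l ∈ W₀, A n l ≠ 0)
    (hAub : ∀ n : ℕ, ∀ l ∈ W₀, ‖A n l‖ ≤ c₂ ^ n)
    (δ : ℕ → (Fin m → ℂ) → ℝ) (hδpos : ∀ n, ∀ l ∈ V₀, 0 < δ n l)
    (hAδ : ∀ n : ℕ, ∀ l ∈ V₀, ‖A n l‖ ≤ c₁ ^ n * δ n l)
    (hδA : ∀ n : ℕ, ∀ l ∈ V₀, δ n l ^ k ≤ ‖A n l‖) :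
    ∀ n : ℕ, 1 ≤ n → ∀ l ∈ V₀, ∀ l₀' ∈ V₀,
      (1 / (n : ℝ)) * (-Real.log (δ n l)) ≤
        ((k : ℝ) / α) * ((1 / (n : ℝ)) * (-Real.log (δ n l₀'))) +
          Real.log (c₁ * c₂ ^ ((1 - α) / α)) :=
  singular_value_transfer_general W₀ V₀ hV₀W₀ k α hα0 hHarnack c₁ c₂ hc₁ hc₂ A hAhol hAnz hAub δ hAδ
    hδA
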